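/- For every log trace e : List E and process run f : List F, the edit distance equals the infimum of the costs of all alignments of e and f: δ(e, f) = ⨅ { κ(γ) : γ an alignment of e and f }, and this infimum is attained by some alignment. -/

import Mathlib

variable {E F : Type*}

/-- Edit distance (head recursion, applied to reversed lists to match the
snoc-based recursive definition). -/
noncomputable def editAux (PL : E → ℕ∞) (PM : F → ℕ∞) (Peq : E → F → ℕ∞) : List E → List F → ℕ∞
  | [], [] => 0
  | a :: e, [] => PL a + editAux PL PM Peq e []
  | [], b :: f => PM b + editAux PL PM Peq [] f
  | a :: e, b :: f =>
      min (editAux PL PM Peq e f + Peq a b)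
        (min (PL a + editAux PL PM Peq e (b :: f))
             (PM b + editAux PL PM Peq (a :: e) f))
termination_by e f => e.length + f.length

/-- The edit distance `δ`, satisfying
`δ [] [] = 0`, `δ (e ++ [a]) [] = PL a + δ e []`,
`δ [] (f ++ [b]) = PM b + δ [] f`, and
`δ (e ++ [a]) (f ++ [b]) =
  min (δ e f + Peq a b) (min (PL a + δ e (f ++ [b])) (PM b + δ (e ++ [a]) f))`. -/
noncomputable def editDist (PL : E → ℕ∞) (PM : F → ℕ∞) (Peq : E → F → ℕ∞)
    (e : List E) (f : List F) : ℕ∞ :=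
  editAux PL PM Peq e.reverse f.reverse

/-- Projection of a sequence of moves onto the log component. -/
def logProj (γ : List (Option E × Option F)) : List E := γ.filterMap Prod.fst

/-- Projection of a sequence of moves onto the model component. -/
def modelProj (γ : List (Option E × Option F)) : List F := γ.filterMap Prod.snd

/-- `γ` is an alignment of log trace `e` and process run `f`: it consists of
moves (no `(none, none)` pair), its log projection is `e` and its model
projection is `f`. -/
def IsAlignment (γ : List (Option E × Option F)) (e : List E) (f : List F) : Prop :=
  (∀ m ∈ γ, m ≠ ((none : Option E), (none : Option F))) ∧
    logProj γ = e ∧ modelProj γ = f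

/-- Cost of a single move. -/
def moveCost (PL : E → ℕ∞) (PM : F → ℕ∞) (Peq : E → F → ℕ∞) :
    Option E × Option F → ℕ∞
  | (some a, none) => PL a
  | (none, some b) => PM b
  | (some a, some b) => Peq a b
  | (none, none) => 0

/-- Cost `κ` of an alignment: the sum of the costs of its moves. -/
def alignCost (PL : E → ℕ∞) (PM : F → ℕ∞) (Peq : E → F → ℕ∞)
    (γ : List (Option E × Option F)) : ℕ∞ :=
  (γ.map (moveCost PL PM Peq)).sum

/-!
The three clauses of the recursion for `δ` are exactly the three ways an alignment can end:
with a synchronous move, a log move or a model move. Working with `editAux` on reversed lists,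
every alignment peels off a first move, and each peeled move bounds `editAux` from above by the
cost of that move; conversely, following the branch that realizes the minimum at every step
builds an alignment of cost exactly `editAux`.
-/

section Alignment

variable {m : Option E × Option F} {γ : List (Option E × Option F)} {e : List E} {f : List F}

lemma logProj_cons : logProj (m :: γ) = m.1.toList ++ logProj γ := by
  rcases m with ⟨_ | _, _⟩ <;> rfl

lemma modelProj_cons : modelProj (m :: γ) = m.2.toList ++ modelProj γ := by
  rcases m with ⟨_, _ | _⟩ <;> rfl

lemma IsAlignment.nil : IsAlignment ([] : List (Option E × Option F)) [] [] :=
  ⟨by simp, rfl, rfl⟩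

lemma IsAlignment.cons (hm : m ≠ (none, none)) (h : IsAlignment γ e f) :
    IsAlignment (m :: γ) (m.1.toList ++ e) (m.2.toList ++ f) := by
  obtain ⟨hγ, rfl, rfl⟩ := h
  exact ⟨List.forall_mem_cons.2 ⟨hm, hγ⟩, logProj_cons, modelProj_cons⟩

lemma IsAlignment.reverse (h : IsAlignment γ e f) :
    IsAlignment γ.reverse e.reverse f.reverse := by
  obtain ⟨hγ, rfl, rfl⟩ := h
  exact ⟨fun m hm => hγ m (List.mem_reverse.1 hm), List.filterMap_reverse ..,
    List.filterMap_reverse ..⟩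

end Alignment

section Cost

variable (PL : E → ℕ∞) (PM : F → ℕ∞) (Peq : E → F → ℕ∞)

lemma alignCost_cons (m : Option E × Option F) (γ : List (Option E × Option F)) :
    alignCost PL PM Peq (m :: γ) = moveCost PL PM Peq m + alignCost PL PM Peq γ :=
  List.sum_cons

lemma alignCost_reverse (γ : List (Option E × Option F)) :
    alignCost PL PM Peq γ.reverse = alignCost PL PM Peq γ := by
  simp [alignCost, List.map_reverse, List.sum_reverse]

lemma editAux_cons_left_le (a : E) (e : List E) (f : List F) :
    editAux PL PM Peq (a :: e) f ≤ PL a + editAux PL PM Peq e f := by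
  cases f with
  | nil => rw [editAux]
  | cons b f => rw [editAux]; exact (min_le_right _ _).trans (min_le_left _ _)

lemma editAux_cons_right_le (b : F) (e : List E) (f : List F) :
    editAux PL PM Peq e (b :: f) ≤ PM b + editAux PL PM Peq e f := by
  cases e with
  | nil => rw [editAux]
  | cons a e => rw [editAux]; exact (min_le_right _ _).trans (min_le_right _ _)

lemma editAux_cons_cons_le (a : E) (b : F) (e : List E) (f : List F) :
    editAux PL PM Peq (a :: e) (b :: f) ≤ Peq a b + editAux PL PM Peq e f := by
  rw [editAux, add_comm]
  exact min_le_left _ _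

lemma editAux_append_le_moveCost_add {m : Option E × Option F} (hm : m ≠ (none, none))
    (e : List E) (f : List F) :
    editAux PL PM Peq (m.1.toList ++ e) (m.2.toList ++ f) ≤
      moveCost PL PM Peq m + editAux PL PM Peq e f := by
  rcases m with ⟨_ | a, _ | b⟩
  · exact absurd rfl hm
  · exact editAux_cons_right_le PL PM Peq b e f
  · exact editAux_cons_left_le PL PM Peq a e f
  · exact editAux_cons_cons_le PL PM Peq a b e f

lemma editAux_le_alignCost {γ : List (Option E × Option F)} {e : List E} {f : List F}
    (h : IsAlignment γ e f) : editAux PL PM Peq e f ≤ alignCost PL PM Peq γ := by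
  obtain ⟨hγ, rfl, rfl⟩ := h
  induction γ with
  | nil => show editAux PL PM Peq [] [] ≤ 0; rw [editAux]
  | cons m γ ih =>
    obtain ⟨hm, hγ⟩ := List.forall_mem_cons.1 hγ
    rw [logProj_cons, modelProj_cons, alignCost_cons]
    exact (editAux_append_le_moveCost_add PL PM Peq hm _ _).trans (add_le_add_right (ih hγ) _)

lemma exists_isAlignment_alignCost_eq_editAux (e : List E) (f : List F) :
    ∃ γ, IsAlignment γ e f ∧ alignCost PL PM Peq γ = editAux PL PM Peq e f := by
  induction e, f using editAux.induct with
  | case1 => exact ⟨[], .nil, by rw [editAux]; rfl⟩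
  | case2 a e ih =>
    obtain ⟨γ, hγ, hc⟩ := ih
    exact ⟨(some a, none) :: γ, hγ.cons (by simp), by rw [alignCost_cons, hc, editAux]; rfl⟩
  | case3 b f ih =>
    obtain ⟨γ, hγ, hc⟩ := ih
    exact ⟨(none, some b) :: γ, hγ.cons (by simp), by rw [alignCost_cons, hc, editAux]; rfl⟩
  | case4 a e b f ih_sync ih_log ih_model =>
    obtain ⟨γs, hγs, hcs⟩ := ih_sync
    obtain ⟨γl, hγl, hcl⟩ := ih_log
    obtain ⟨γm, hγm, hcm⟩ := ih_model
    rw [editAux]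
    rcases min_choice (editAux PL PM Peq e f + Peq a b)
        (min (PL a + editAux PL PM Peq e (b :: f)) (PM b + editAux PL PM Peq (a :: e) f))
      with h | h <;> rw [h]
    · exact ⟨(some a, some b) :: γs, hγs.cons (by simp),
        by rw [alignCost_cons, hcs, add_comm]; rfl⟩
    · rcases min_choice (PL a + editAux PL PM Peq e (b :: f))
          (PM b + editAux PL PM Peq (a :: e) f) with h | h <;> rw [h]
      · exact ⟨(some a, none) :: γl, hγl.cons (by simp), by rw [alignCost_cons, hcl]; rfl⟩
      · exact ⟨(none, some b) :: γm, hγm.cons (by simp), by rw [alignCost_cons, hcm]; rfl⟩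

lemma editDist_le_alignCost {γ : List (Option E × Option F)} {e : List E} {f : List F}
    (h : IsAlignment γ e f) : editDist PL PM Peq e f ≤ alignCost PL PM Peq γ :=
  alignCost_reverse PL PM Peq γ ▸ editAux_le_alignCost PL PM Peq h.reverse

lemma exists_isAlignment_alignCost_eq_editDist (e : List E) (f : List F) :
    ∃ γ, IsAlignment γ e f ∧ alignCost PL PM Peq γ = editDist PL PM Peq e f := by
  obtain ⟨γ, hγ, hc⟩ := exists_isAlignment_alignCost_eq_editAux PL PM Peq e.reverse f.reverse
  refine ⟨γ.reverse, ?_, by rw [alignCost_reverse, hc]; rfl⟩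
  simpa using hγ.reverse

end Cost

theorem editDist_eq_iInf_alignCost
    (PL : E → ℕ∞) (PM : F → ℕ∞) (Peq : E → F → ℕ∞)
    (e : List E) (f : List F) :
    (editDist PL PM Peq e f =
      ⨅ γ : {γ : List (Option E × Option F) // IsAlignment γ e f},
        alignCost PL PM Peq γ.1) ∧
    (∃ γ : List (Option E × Option F),
      IsAlignment γ e f ∧ alignCost PL PM Peq γ = editDist PL PM Peq e f) := by
  obtain ⟨γ, hγ, hc⟩ := exists_isAlignment_alignCost_eq_editDist PL PM Peq e f
  refine ⟨le_antisymm (le_iInf fun γ' => editDist_le_alignCost PL PM Peq γ'.2) ?_, γ, hγ, hc⟩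
  exact hc ▸ iInf_le (fun γ' : {γ // IsAlignment γ e f} => alignCost PL PM Peq γ'.1) ⟨γ, hγ⟩
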